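/- Let H and H' be real inner product spaces, G : H → H' a continuous linear map, V a subspace of H, ν > 0 and T > 0. Assume the inverse-estimate hypothesis: there is C_inv > 0 with ‖G v‖ ≤ C_inv ‖v‖ for all v ∈ V. Suppose φ : [0,T] → H is differentiable with continuous derivative and φ(t) ∈ V for all t, η : [0,T] → H is continuous, and for all t ∈ [0,T] and all v ∈ V the error equation ⟪φ'(t), v⟫ + ν ⟪G φ(t), G v⟫ = ν ⟪G η(t), G v⟫ holds. Then for every t ∈ [0,T], ‖φ(t)‖ ≤ ‖φ(0)‖ + C_inv · ν · ∫₀ᵗ ‖G η(s)‖ ds. (This is the integrated form of estimate (3.24) of Approach II.B of the paper, obtained by applying the POD inverse estimate to ‖G φ‖ on the right-hand side of the energy inequality; the extra factor C_inv increases the suboptimality with respect to r.) -/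

import Mathlib

/-!
Testing the error equation against `φ(t) ∈ V` itself and dropping the nonnegative term
`ν ‖G φ‖²` gives `⟪φ', φ⟫ ≤ ν ‖G η‖ ‖G φ‖ ≤ C_inv ν ‖G η‖ ‖φ‖` by the inverse estimate.
Formally this says `d/dt ‖φ‖ ≤ C_inv ν ‖G η‖`; since `‖φ‖` need not be differentiable where
`φ` vanishes, the inequality is integrated for `√(‖φ‖² + ε²)` instead and then `ε → 0`.
-/

open scoped RealInnerProductSpace
open MeasureTheory Set

section NormRegularized

variable {E : Type*} [NormedAddCommGroup E] [InnerProductSpace ℝ E]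

theorem HasDerivAt.sqrt_norm_sq_add_sq {f : ℝ → E} {f' : E} {t : ℝ} (hf : HasDerivAt f f' t)
    {ε : ℝ} (hε : ε ≠ 0) :
    HasDerivAt (fun s => √(‖f s‖ ^ 2 + ε ^ 2)) (⟪f t, f'⟫ / √(‖f t‖ ^ 2 + ε ^ 2)) t := by
  have hpos : ‖f t‖ ^ 2 + ε ^ 2 ≠ 0 := by positivity
  convert (hf.norm_sq.add_const (ε ^ 2)).sqrt hpos using 1
  field_simp

theorem norm_le_norm_add_integral_of_inner_deriv_le {f f' : ℝ → E} {g : ℝ → ℝ} {a b : ℝ}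
    (hab : a ≤ b) (hfc : ContinuousOn f (Icc a b))
    (hf : ∀ t ∈ Ioo a b, HasDerivAt f (f' t) t) (hg : IntegrableOn g (Icc a b))
    (hg_nonneg : ∀ t ∈ Ioo a b, 0 ≤ g t)
    (hbound : ∀ t ∈ Ioo a b, ⟪f t, f' t⟫ ≤ g t * ‖f t‖) :
    ‖f b‖ ≤ ‖f a‖ + ∫ t in a..b, g t := by
  refine le_of_forall_pos_le_add fun ε hε => ?_
  have hqc : ContinuousOn (fun s => √(‖f s‖ ^ 2 + ε ^ 2)) (Icc a b) :=
    ((hfc.norm.pow 2).add continuousOn_const).sqrt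
  have hq := intervalIntegral.sub_le_integral_of_hasDeriv_right_of_le hab hqc
    (fun t ht => ((hf t ht).sqrt_norm_sq_add_sq hε.ne').hasDerivWithinAt) hg
    (fun t ht => by
      have hroot : ‖f t‖ ≤ √(‖f t‖ ^ 2 + ε ^ 2) := Real.le_sqrt_of_sq_le (by nlinarith)
      rw [div_le_iff₀ (by positivity)]
      exact (hbound t ht).trans (mul_le_mul_of_nonneg_left hroot (hg_nonneg t ht)))
  have hb : ‖f b‖ ≤ √(‖f b‖ ^ 2 + ε ^ 2) := Real.le_sqrt_of_sq_le (by nlinarith)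
  have ha : √(‖f a‖ ^ 2 + ε ^ 2) ≤ ‖f a‖ + ε :=
    (Real.sqrt_le_left (by positivity)).2 (by nlinarith [norm_nonneg (f a)])
  linarith

end NormRegularized

theorem inner_le_of_inverse_estimate {H H' : Type*} [NormedAddCommGroup H]
    [InnerProductSpace ℝ H] [NormedAddCommGroup H'] [InnerProductSpace ℝ H']
    (G : H →L[ℝ] H') {ν C : ℝ} (hν : 0 ≤ ν) {w x y : H} (hx : ‖G x‖ ≤ C * ‖x‖)
    (herr : ⟪w, x⟫ + ν * ⟪G x, G x⟫ = ν * ⟪G y, G x⟫) :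
    ⟪w, x⟫ ≤ C * ν * ‖G y‖ * ‖x‖ := by
  have hGx : 0 ≤ ⟪G x, G x⟫ := real_inner_self_nonneg
  calc ⟪w, x⟫ ≤ ν * ⟪G y, G x⟫ := by nlinarith
    _ ≤ ν * (‖G y‖ * (C * ‖x‖)) :=
      mul_le_mul_of_nonneg_left
        ((real_inner_le_norm _ _).trans (mul_le_mul_of_nonneg_left hx (norm_nonneg _))) hν
    _ = C * ν * ‖G y‖ * ‖x‖ := by ring

theorem approach_IIB_estimate_general
    {H H' : Type*} [NormedAddCommGroup H] [InnerProductSpace ℝ H]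
    [NormedAddCommGroup H'] [InnerProductSpace ℝ H']
    (G : H →L[ℝ] H') (V : Submodule ℝ H)
    (ν T : ℝ) (hν : 0 < ν)
    (Cinv : ℝ) (hCinv : 0 < Cinv)
    (hinv : ∀ v ∈ V, ‖G v‖ ≤ Cinv * ‖v‖)
    (φ φ' η : ℝ → H)
    (hφ : ∀ t ∈ Set.Icc (0:ℝ) T, HasDerivAt φ (φ' t) t)
    (hηc : ContinuousOn η (Set.Icc (0:ℝ) T))
    (hφV : ∀ t ∈ Set.Icc (0:ℝ) T, φ t ∈ V)
    (herr : ∀ t ∈ Set.Icc (0:ℝ) T, ∀ v ∈ V,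
      ⟪φ' t, v⟫ + ν * ⟪G (φ t), G v⟫ = ν * ⟪G (η t), G v⟫) :
    ∀ t ∈ Set.Icc (0:ℝ) T,
      ‖φ t‖ ≤ ‖φ 0‖ + Cinv * ν * ∫ s in (0:ℝ)..t, ‖G (η s)‖ := by
  intro t ht
  have hsub : Icc 0 t ⊆ Icc 0 T := Icc_subset_Icc_right ht.2
  have hGη : IntegrableOn (fun s => Cinv * ν * ‖G (η s)‖) (Icc 0 t) :=
    (continuousOn_const.mul (G.continuous.comp_continuousOn (hηc.mono hsub)).norm
      ).integrableOn_compact isCompact_Icc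
  have key := norm_le_norm_add_integral_of_inner_deriv_le ht.1
    (fun s hs => (hφ s (hsub hs)).continuousAt.continuousWithinAt)
    (fun s hs => hφ s (hsub (Ioo_subset_Icc_self hs))) hGη
    (fun s _ => by positivity)
    (fun s hs => by
      have hs' := hsub (Ioo_subset_Icc_self hs)
      rw [real_inner_comm]
      exact inner_le_of_inverse_estimate G hν.le (hinv _ (hφV s hs'))
        (herr s hs' _ (hφV s hs')))
  rwa [intervalIntegral.integral_const_mul] at key

/-- Integrated estimate (3.24) of Approach II.B: under the inverse estimate
`‖G v‖ ≤ C_inv ‖v‖` on `V` and the error equation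
`⟪φ', v⟫ + ν ⟪G φ, G v⟫ = ν ⟪G η, G v⟫` for all `v ∈ V`, one has
`‖φ(t)‖ ≤ ‖φ(0)‖ + C_inv ν ∫₀ᵗ ‖G η(s)‖ ds`. -/
theorem approach_IIB_estimate
    {H H' : Type*} [NormedAddCommGroup H] [InnerProductSpace ℝ H]
    [NormedAddCommGroup H'] [InnerProductSpace ℝ H']
    (G : H →L[ℝ] H') (V : Submodule ℝ H)
    (ν T : ℝ) (hν : 0 < ν) (hT : 0 < T)
    (Cinv : ℝ) (hCinv : 0 < Cinv)
    (hinv : ∀ v ∈ V, ‖G v‖ ≤ Cinv * ‖v‖)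
    (φ φ' η : ℝ → H)
    (hφ : ∀ t ∈ Set.Icc (0:ℝ) T, HasDerivAt φ (φ' t) t)
    (hφ'c : ContinuousOn φ' (Set.Icc (0:ℝ) T))
    (hηc : ContinuousOn η (Set.Icc (0:ℝ) T))
    (hφV : ∀ t ∈ Set.Icc (0:ℝ) T, φ t ∈ V)
    (herr : ∀ t ∈ Set.Icc (0:ℝ) T, ∀ v ∈ V,
      ⟪φ' t, v⟫ + ν * ⟪G (φ t), G v⟫ = ν * ⟪G (η t), G v⟫) :
    ∀ t ∈ Set.Icc (0:ℝ) T,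
      ‖φ t‖ ≤ ‖φ 0‖ + Cinv * ν * ∫ s in (0:ℝ)..t, ‖G (η s)‖ :=
  approach_IIB_estimate_general G V ν T hν Cinv hCinv hinv φ φ' η hφ hηc hφV herr
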